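/- arXiv:2101.08735 — 2 statements merged into one kernel-verified Lean document; each statement's English description precedes it below -/
import Mathlib

section
/- Let M be a monoid, m : ℕ → M a sequence, t ≥ 2 a natural number, and ℓ ≤ r natural numbers. Define s_j := t^j·⌈ℓ/t^j⌉ and p_j := t^j·⌊r/t^j⌋, and let k be any natural number with s_k ≤ p_k. Then ℓ = s_0 ≤ s_1 ≤ ⋯ ≤ s_k ≤ p_k ≤ p_{k−1} ≤ ⋯ ≤ p_0 = r, and m[ℓ, r) = (∏_{j=0}^{k−1} m[s_j, s_{j+1})) · m[s_k, p_k) · (∏_{j=1}^{k} m[p_{k−j+1}, p_{k−j})), where each product is taken in order of increasing j. -/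
/-!
Rounding `ℓ` up and `r` down to multiples of `t^j` gives monotone sequences: a multiple of
`t^(j+1)` is also a multiple of `t^j`, so the least multiple of `t^j` above `ℓ` is at most the least
multiple of `t^(j+1)` above `ℓ`, and dually for `r`. The points `ℓ = s₀ ≤ ⋯ ≤ s_k ≤ p_k ≤ ⋯ ≤ p₀ = r`
therefore form a chain, and `m[ℓ, r)` splits along it by associativity.
-/

/-- `m[a, b)`: the ordered product `m(a)·m(a+1)⋯m(b−1)`, with `m[a,a) = 1`. -/
def prodRange {M : Type*} [Monoid M] (m : ℕ → M) (a b : ℕ) : M :=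
  ((List.range' a (b - a)).map m).prod

namespace Nat

lemma mul_ceilDiv_le_of_dvd {n c l : ℕ} (hn : 0 < n) (hdvd : n ∣ c) (hlc : l ≤ c) :
    n * (l ⌈/⌉ n) ≤ c := by
  obtain ⟨q, rfl⟩ := hdvd
  exact Nat.mul_le_mul_left n ((ceilDiv_le_iff_le_mul hn).2 hlc)

lemma le_mul_div_of_dvd {n c r : ℕ} (hdvd : n ∣ c) (hcr : c ≤ r) : c ≤ n * (r / n) :=
  calc c = n * (c / n) := (Nat.mul_div_cancel' hdvd).symm
    _ ≤ n * (r / n) := Nat.mul_le_mul_left n (Nat.div_le_div_right hcr)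

lemma monotone_pow_mul_ceilDiv_pow {t : ℕ} (ht : 0 < t) (l : ℕ) :
    Monotone fun j => t ^ j * (l ⌈/⌉ t ^ j) := by
  refine monotone_nat_of_le_succ fun j => mul_ceilDiv_le_of_dvd (pow_pos ht j) ?_ ?_
  · exact (pow_dvd_pow t j.le_succ).mul_right _
  · exact le_smul_ceilDiv (pow_pos ht (j + 1))

lemma antitone_pow_mul_div_pow (t r : ℕ) : Antitone fun j => t ^ j * (r / t ^ j) :=
  antitone_nat_of_succ_le fun j =>
    le_mul_div_of_dvd ((pow_dvd_pow t j.le_succ).mul_right _) (Nat.mul_div_le r _)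

end Nat

section prodRange

variable {M : Type*} [Monoid M] (m : ℕ → M)

lemma prodRange_mul_prodRange {a b c : ℕ} (hab : a ≤ b) (hbc : b ≤ c) :
    prodRange m a b * prodRange m b c = prodRange m a c := by
  unfold prodRange
  have hrange := List.range'_append_1 (s := a) (m := b - a) (n := c - b)
  rw [Nat.add_sub_cancel' hab, add_comm, Nat.sub_add_sub_cancel hbc hab] at hrange
  rw [← List.prod_append, ← List.map_append, hrange]

lemma prodRange_eq_prod_of_monotone {f : ℕ → ℕ} (hf : Monotone f) (k : ℕ) :
    prodRange m (f 0) (f k) = ((List.range k).map fun j => prodRange m (f j) (f (j + 1))).prod := by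
  induction k with
  | zero => simp [prodRange]
  | succ k ih =>
    rw [List.range_succ, List.map_append, List.prod_append, ← ih, List.map_singleton,
      List.prod_singleton, prodRange_mul_prodRange m (hf k.zero_le) (hf k.le_succ)]

lemma prodRange_eq_prod_of_antitone {g : ℕ → ℕ} (hg : Antitone g) (k : ℕ) :
    prodRange m (g k) (g 0) =
      ((List.range k).map fun j => prodRange m (g (k - j)) (g (k - j - 1))).prod := by
  have hf : Monotone fun j => g (k - j) := fun _ _ hij => hg (Nat.sub_le_sub_left hij k)
  simpa [Nat.sub_sub] using prodRange_eq_prod_of_monotone m hf k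

end prodRange

theorem prodRange_decomposition_general {M : Type*} [Monoid M] (m : ℕ → M) (t : ℕ) (ht : 2 ≤ t)
    (l r : ℕ) (s p : ℕ → ℕ)
    (hs : ∀ j, s j = t ^ j * ((l + t ^ j - 1) / t ^ j))
    (hp : ∀ j, p j = t ^ j * (r / t ^ j))
    (k : ℕ) (hk : s k ≤ p k) :
    s 0 = l ∧ p 0 = r ∧
    (∀ j < k, s j ≤ s (j + 1)) ∧ (∀ j < k, p (j + 1) ≤ p j) ∧
    prodRange m l r =
      ((List.range k).map fun j => prodRange m (s j) (s (j + 1))).prod *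
        prodRange m (s k) (p k) *
        ((List.range k).map fun j => prodRange m (p (k - j)) (p (k - j - 1))).prod := by
  have hs_mono : Monotone s := by
    rw [show s = _ from funext hs]
    -- `l ⌈/⌉ t ^ j` unfolds to `(l + t ^ j - 1) / t ^ j`
    exact Nat.monotone_pow_mul_ceilDiv_pow (by omega) l
  have hp_anti : Antitone p := by
    rw [show p = _ from funext hp]
    exact Nat.antitone_pow_mul_div_pow t r
  have hs0 : s 0 = l := by simp [hs]
  have hp0 : p 0 = r := by simp [hp]
  refine ⟨hs0, hp0, fun j _ => hs_mono j.le_succ, fun j _ => hp_anti j.le_succ, ?_⟩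
  rw [← prodRange_eq_prod_of_monotone m hs_mono, ← prodRange_eq_prod_of_antitone m hp_anti,
    prodRange_mul_prodRange m (hs_mono k.zero_le) hk,
    prodRange_mul_prodRange m (hs_mono k.zero_le |>.trans hk) (hp_anti k.zero_le), hs0, hp0]

/-- with `s_j = t^j·⌈l/t^j⌉` and `p_j = t^j·⌊r/t^j⌋` and `s_k ≤ p_k`,
the points `l = s_0 ≤ s_1 ≤ ⋯ ≤ s_k ≤ p_k ≤ ⋯ ≤ p_0 = r` form a chain and
`m[l, r) = (∏_{j<k} m[s_j, s_{j+1})) · m[s_k, p_k) · (∏_{j=1}^{k} m[p_{k−j+1}, p_{k−j}))`. -/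
theorem prodRange_decomposition {M : Type*} [Monoid M] (m : ℕ → M) (t : ℕ) (ht : 2 ≤ t)
    (l r : ℕ) (hlr : l ≤ r) (s p : ℕ → ℕ)
    (hs : ∀ j, s j = t ^ j * ((l + t ^ j - 1) / t ^ j))
    (hp : ∀ j, p j = t ^ j * (r / t ^ j))
    (k : ℕ) (hk : s k ≤ p k) :
    s 0 = l ∧ p 0 = r ∧
    (∀ j < k, s j ≤ s (j + 1)) ∧ (∀ j < k, p (j + 1) ≤ p j) ∧
    prodRange m l r =
      ((List.range k).map fun j => prodRange m (s j) (s (j + 1))).prod *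
        prodRange m (s k) (p k) *
        ((List.range k).map fun j => prodRange m (p (k - j)) (p (k - j - 1))).prod :=
  prodRange_decomposition_general m t ht l r s p hs hp k hk
end

section
/- Every finite group-free monoid M satisfies at least one of the following: (a) M = {1}; (b) there exist σ ∈ M and k ≥ 1 such that M \ {1} = {σ, σ², …, σ^k} and σ^k = σ^{k+1}; (c) σ·σ' = σ for all σ, σ' ∈ M \ {1}; (d) there exist submonoids V and T of M with V ≠ M and T ≠ M such that M = V ∪ T and T \ {1} is a left ideal of M, i.e., σ_M·σ_T ∈ T \ {1} for all σ_M ∈ M and σ_T ∈ T \ {1}. -/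
/-!
A finite group-free monoid is aperiodic (`x ^ n = x ^ (n + 1)` for some `n`), hence no product of
elements `≠ 1` is `1` and `{1}ᶜ` is a left ideal. If `M` is cyclic we are in case (b). If every
`b ≠ 1` generates `{1}ᶜ` as a left ideal, then `a = m * b ^ n` with `b ^ n = b ^ (n + 1)` gives
`a * b = a`, case (c). Otherwise take `I` maximal among the left ideals strictly inside `{1}ᶜ` and
let `G` be the complement of `I ∪ {1}`; put `T = I ∪ {1}` and `V = ⟨G⟩`. By maximality
`G ⊆ M * g` for every `g ∈ G`. If `⟨G⟩` were all of `M`, each `g ∈ G` would even generate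
`{1}ᶜ`, and then either `G = {h}`, making `M` cyclic, or `G ∪ {1}` is a submonoid, which misses
the nonempty `I`.
-/

open Set Submonoid

section

variable {M : Type*} [Monoid M]

def IsGroupFree (M : Type*) [Monoid M] : Prop :=
  ∀ S : Set M, (∀ a ∈ S, ∀ b ∈ S, a * b ∈ S) →
    (∃ e ∈ S, (∀ a ∈ S, e * a = a ∧ a * e = a) ∧ ∀ a ∈ S, ∃ b ∈ S, a * b = e ∧ b * a = e) →
    ∃ x, S = {x}

def IsAperiodic (M : Type*) [Monoid M] : Prop :=
  ∀ x : M, ∃ n, x ^ n = x ^ (n + 1)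

def IsLeftIdeal (I : Set M) : Prop :=
  ∀ m, ∀ x ∈ I, m * x ∈ I

theorem pow_add_mul_eq_of_pow_eq_pow_add {x : M} {i p : ℕ} (h : x ^ i = x ^ (i + p)) {u : ℕ}
    (hu : i ≤ u) (q : ℕ) : x ^ (u + p * q) = x ^ u := by
  obtain ⟨d, rfl⟩ := Nat.exists_eq_add_of_le hu
  induction q with
  | zero => rfl
  | succ q ih =>
    calc x ^ (i + d + p * (q + 1)) = x ^ (i + p) * x ^ (d + p * q) := by rw [← pow_add]; ring_nf
      _ = x ^ (i + d) := by rw [← h, ← pow_add, ← add_assoc, ih]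

theorem pow_eq_pow_of_pow_eq_pow_succ {x : M} {n : ℕ} (h : x ^ n = x ^ (n + 1)) {i j : ℕ}
    (hi : n ≤ i) (hj : n ≤ j) : x ^ i = x ^ j := by
  have stable {k : ℕ} (hk : n ≤ k) : x ^ k = x ^ n := by
    simpa [Nat.add_sub_cancel' hk] using pow_add_mul_eq_of_pow_eq_pow_add h le_rfl (k - n)
  rw [stable hi, stable hj]

theorem exists_pow_eq_pow_add [Finite M] (x : M) : ∃ i p, p ≠ 0 ∧ x ^ i = x ^ (i + p) := by
  obtain ⟨i, j, hij, h⟩ := Finite.exists_ne_map_eq_of_infinite (fun n : ℕ => x ^ n)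
  rcases hij.lt_or_gt with hlt | hlt
  · exact ⟨i, j - i, by omega, by rwa [Nat.add_sub_cancel' hlt.le]⟩
  · exact ⟨j, i - j, by omega, by rw [Nat.add_sub_cancel' hlt.le]; exact h.symm⟩

theorem exists_isIdempotentElem_pow [Finite M] (x : M) : ∃ m, m ≠ 0 ∧ IsIdempotentElem (x ^ m) := by
  obtain ⟨i, p, hp, h⟩ := exists_pow_eq_pow_add x
  -- a multiple of the period `p` beyond the preperiod `i`
  refine ⟨p * (i + 1), by positivity, ?_⟩
  rw [IsIdempotentElem, ← pow_add]
  exact pow_add_mul_eq_of_pow_eq_pow_add h (by nlinarith [Nat.one_le_iff_ne_zero.2 hp]) _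

/-- The powers `x ^ (m + n)` above an idempotent power `x ^ m` form a group with identity `x ^ m`
(the inverse of `x ^ (m + n)` is `x ^ (m + (m - 1) * n)`: the exponents add up to a multiple of
`m`), so group-freeness collapses it to a point. -/
theorem IsGroupFree.isAperiodic [Finite M] (hM : IsGroupFree M) : IsAperiodic M := by
  intro x
  obtain ⟨m, hm, he⟩ := exists_isIdempotentElem_pow x
  obtain ⟨k, rfl⟩ := Nat.exists_eq_succ_of_ne_zero hm
  have absorb : ∀ q n, x ^ ((k + 1) * (q + 1) + n) = x ^ (k + 1 + n) := fun q n => by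
    rw [pow_add, pow_mul, he.pow_succ_eq, pow_add]
  set S := range fun n => x ^ (k + 1 + n)
  have closed : ∀ a ∈ S, ∀ b ∈ S, a * b ∈ S := by
    rintro _ ⟨a, rfl⟩ _ ⟨b, rfl⟩
    exact ⟨k + 1 + a + b, by rw [← pow_add]; ring_nf⟩
  have identity : ∀ y ∈ S, x ^ (k + 1) * y = y ∧ y * x ^ (k + 1) = y := by
    rintro _ ⟨n, rfl⟩
    constructor <;> beta_reduce <;> rw [← pow_add, ← absorb 1 n] <;> ring_nf
  have inverse : ∀ y ∈ S, ∃ z ∈ S, y * z = x ^ (k + 1) ∧ z * y = x ^ (k + 1) := by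
    rintro _ ⟨n, rfl⟩
    refine ⟨x ^ (k + 1 + k * n), ⟨k * n, rfl⟩, ?_, ?_⟩ <;>
      rw [← pow_add, ← add_zero (k + 1), ← absorb (n + 1) 0] <;> ring_nf
  obtain ⟨c, hc⟩ := hM S closed ⟨x ^ (k + 1), ⟨0, rfl⟩, identity, inverse⟩
  have h0 : x ^ (k + 1) ∈ ({c} : Set M) := hc ▸ ⟨0, rfl⟩
  have h1 : x ^ (k + 1 + 1) ∈ ({c} : Set M) := hc ▸ ⟨1, rfl⟩
  exact ⟨k + 1, h0.trans h1.symm⟩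

theorem IsLeftIdeal.union {I J : Set M} (hI : IsLeftIdeal I) (hJ : IsLeftIdeal J) :
    IsLeftIdeal (I ∪ J) := by
  rintro m x (hx | hx)
  exacts [Or.inl (hI m x hx), Or.inr (hJ m x hx)]

theorem isLeftIdeal_range_mul_right (a : M) : IsLeftIdeal (range (· * a)) := by
  rintro m _ ⟨n, rfl⟩
  exact ⟨m * n, mul_assoc m n a⟩

theorem IsLeftIdeal.mul_mem {I : Set M} (hI : IsLeftIdeal I) : ∀ a ∈ I, ∀ b ∈ I, a * b ∈ I :=
  fun a _ b hb => hI a b hb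

def Submonoid.insertOne (S : Set M) (hS : ∀ a ∈ S, ∀ b ∈ S, a * b ∈ S) : Submonoid M where
  carrier := insert 1 S
  one_mem' := mem_insert 1 S
  mul_mem' := by
    rintro a b (rfl | ha) (rfl | hb)
    · exact Or.inl (one_mul 1)
    · rw [one_mul]; exact Or.inr hb
    · rw [mul_one]; exact Or.inr ha
    · exact Or.inr (hS a ha b hb)

theorem closure_le_insertOne_range {S : Set M} {g : M} (hS : S ⊆ range (· * g)) :
    closure S ≤ Submonoid.insertOne _ (isLeftIdeal_range_mul_right g).mul_mem :=
  closure_le.2 (hS.trans (subset_insert _ _))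

namespace IsAperiodic

variable (hM : IsAperiodic M)
include hM

theorem mul_eq_one {a b : M} : a * b = 1 ↔ a = 1 ∧ b = 1 := by
  refine ⟨fun h => ?_, fun ⟨ha, hb⟩ => by rw [ha, hb, one_mul]⟩
  obtain ⟨n, hn⟩ := hM a
  have ha : a = 1 :=
    calc a = a * (a ^ n * b ^ n) := by rw [pow_mul_pow_eq_one n h, mul_one]
      _ = a ^ n * b ^ n := by rw [← mul_assoc, ← pow_succ', ← hn]
      _ = 1 := pow_mul_pow_eq_one n h
  exact ⟨ha, by rwa [ha, one_mul] at h⟩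

theorem pow_ne_one {a : M} (ha : a ≠ 1) {n : ℕ} (hn : n ≠ 0) : a ^ n ≠ 1 := by
  obtain ⟨k, rfl⟩ := Nat.exists_eq_succ_of_ne_zero hn
  rw [pow_succ', Ne, hM.mul_eq_one]
  exact fun h => ha h.1

theorem mul_eq_left_of_forall_exists_mul_eq
    (hL : ∀ a : M, a ≠ 1 → ∀ x : M, x ≠ 1 → ∃ m, m * a = x) {a b : M} (ha : a ≠ 1) (hb : b ≠ 1) :
    a * b = a := by
  obtain ⟨n, hn⟩ := hM b
  obtain ⟨m, rfl⟩ := hL (b ^ (n + 1)) (hM.pow_ne_one hb n.succ_ne_zero) a ha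
  rw [mul_assoc, ← pow_succ, pow_eq_pow_of_pow_eq_pow_succ hn (j := n + 1) (by omega) (by omega)]

theorem exists_setOf_ne_one_eq_of_powers_eq_top {σ : M} (hσ : powers σ = ⊤) (hσ1 : σ ≠ 1) :
    ∃ k, 1 ≤ k ∧ {x : M | x ≠ 1} = {x : M | ∃ i, 1 ≤ i ∧ i ≤ k ∧ x = σ ^ i} ∧
      σ ^ k = σ ^ (k + 1) := by
  obtain ⟨n, hn⟩ := hM σ
  refine ⟨n + 1, by omega, ?_, pow_eq_pow_of_pow_eq_pow_succ hn (by omega) (by omega)⟩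
  ext x
  obtain ⟨j, rfl⟩ := (mem_powers_iff _ _).1 (hσ ▸ mem_top x)
  constructor
  · intro hx
    have hj : j ≠ 0 := by rintro rfl; exact hx (pow_zero σ)
    by_cases hjn : j ≤ n + 1
    · exact ⟨j, by omega, hjn, rfl⟩
    · exact ⟨n + 1, by omega, le_rfl, pow_eq_pow_of_pow_eq_pow_succ hn (by omega) (by omega)⟩
  · rintro ⟨i, hi, -, hx⟩
    exact hx ▸ hM.pow_ne_one hσ1 (by omega)

theorem exists_maximal_leftIdeal [Finite M] {a x : M} (ha : a ≠ 1) (hx : x ≠ 1)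
    (hxa : ∀ m, m * a ≠ x) :
    ∃ I : Set M, IsLeftIdeal I ∧ a ∈ I ∧ I ⊂ {1}ᶜ ∧
      ∀ g ∉ insert 1 I, (insert 1 I)ᶜ ⊆ range (· * g) := by
  have range_subset {g : M} (hg : g ≠ 1) : range (· * g) ⊆ {1}ᶜ := by
    rintro _ ⟨m, rfl⟩ h
    exact hg (hM.mul_eq_one.1 h).2
  obtain ⟨I, haI, hmax⟩ := Finite.exists_le_maximal (p := fun J : Set M => IsLeftIdeal J ∧ J ⊂ {1}ᶜ)
    ⟨isLeftIdeal_range_mul_right a,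
      (ssubset_iff_of_subset (range_subset ha)).2 ⟨x, hx, fun ⟨m, hm⟩ => hxa m hm⟩⟩
  obtain ⟨hI, hIN⟩ := hmax.prop
  refine ⟨I, hI, haI ⟨1, one_mul a⟩, hIN, fun g hg => ?_⟩
  rw [mem_insert_iff, not_or] at hg
  -- `I ∪ M g` is a left ideal strictly above `I`, so by maximality it is all of `{1}ᶜ`
  have hJ : I ∪ range (· * g) = {1}ᶜ := by
    by_contra hne
    have hle := hmax.2 ⟨hI.union (isLeftIdeal_range_mul_right g),
      (union_subset hIN.subset (range_subset hg.1)).ssubset_of_ne hne⟩ subset_union_left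
    exact hg.2 (hle (Or.inr ⟨1, one_mul g⟩))
  intro y hy
  rw [mem_compl_iff, mem_insert_iff, not_or] at hy
  exact (hJ ▸ hy.1 : y ∈ I ∪ range (· * g)).resolve_left hy.2

/-- If `a * b ∈ I`, then `b` has trivial left stabiliser (`n * b = b` with `n = m * a` would put
`b` into `I`), and since `b` and any other `g` generate the same left ideal, `g = b`. -/
theorem compl_insert_one_eq_singleton_or_mul_mem {I : Set M} (hI : IsLeftIdeal I)
    (hN : ∀ g ∉ insert 1 I, {1}ᶜ ⊆ range (· * g)) :
    (∃ h, (insert 1 I)ᶜ = {h}) ∨ ∀ a ∉ insert 1 I, ∀ b ∉ insert 1 I, a * b ∉ insert 1 I := by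
  refine or_iff_not_imp_right.2 fun hnot => ?_
  push Not at hnot
  obtain ⟨a, ha, b, hb, hab⟩ := hnot
  have habI : a * b ∈ I := hab.resolve_left fun h => hb (Or.inl (hM.mul_eq_one.1 h).2)
  have stab (n : M) (hn : n * b = b) : n = 1 := by
    by_contra hn1
    obtain ⟨m, rfl⟩ := hN a ha hn1
    exact hb (Or.inr (by rw [← hn, mul_assoc]; exact hI m _ habI))
  refine ⟨b, eq_singleton_iff_unique_mem.2 ⟨hb, fun g hg => ?_⟩⟩
  have hg1 : g ≠ 1 := fun h => hg (Or.inl h)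
  have hb1 : b ≠ 1 := fun h => hb (Or.inl h)
  obtain ⟨m, rfl⟩ := hN b hb hg1
  obtain ⟨m', hm'⟩ := hN (m * b) hg hb1
  beta_reduce at hm' ⊢
  rw [← mul_assoc] at hm'
  rw [(hM.mul_eq_one.1 (stab _ hm')).2, one_mul]

theorem exists_submonoid_cover [Finite M] (hcyc : ∀ σ : M, powers σ ≠ ⊤) {a x : M}
    (ha : a ≠ 1) (hx : x ≠ 1) (hxa : ∀ m, m * a ≠ x) :
    ∃ V T : Submonoid M, (V : Set M) ≠ univ ∧ (T : Set M) ≠ univ ∧ (V : Set M) ∪ T = univ ∧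
      ∀ m : M, ∀ s ∈ T, s ≠ 1 → m * s ∈ T ∧ m * s ≠ 1 := by
  obtain ⟨I, hI, haI, hIN, hG⟩ := hM.exists_maximal_leftIdeal ha hx hxa
  have hV : closure (insert 1 I)ᶜ ≠ ⊤ := by
    intro hcl
    have hN : ∀ g ∉ insert 1 I, {1}ᶜ ⊆ range (· * g) := fun g hg y hy =>
      (closure_le_insertOne_range (hG g hg) (hcl ▸ mem_top y)).resolve_left hy
    rcases hM.compl_insert_one_eq_singleton_or_mul_mem hI hN with ⟨h, hh⟩ | hmul
    · exact hcyc h (by rw [powers_eq_closure, ← hh, hcl])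
    · have haG : a ∈ Submonoid.insertOne (insert 1 I)ᶜ hmul :=
        closure_le.2 (subset_insert _ _) (hcl ▸ mem_top a)
      rcases haG with h | h
      exacts [ha h, h (Or.inr haI)]
  obtain ⟨g, hg1, hgI⟩ := exists_of_ssubset hIN
  refine ⟨closure (insert 1 I)ᶜ, Submonoid.insertOne I hI.mul_mem, ?_, ?_, ?_, ?_⟩
  · rwa [Ne, ← coe_top, SetLike.coe_set_eq]
  · intro h
    have hgT : g ∈ (Submonoid.insertOne I hI.mul_mem : Set M) := h ▸ mem_univ g
    rcases hgT with h | h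
    exacts [hg1 h, hgI h]
  · refine eq_univ_of_forall fun y => ?_
    by_cases hy : y ∈ insert 1 I
    · exact Or.inr hy
    · exact Or.inl (subset_closure hy)
  · rintro m s (rfl | hs) hs1
    · exact absurd rfl hs1
    · exact ⟨Or.inr (hI m s hs), hIN.subset (hI m s hs)⟩

end IsAperiodic

end

/-- Krohn–Rhodes-style case distinction. Every finite group-free
monoid `M` (no subset closed under multiplication forms a nontrivial group)
satisfies (a), (b), (c) or (d). -/
theorem groupFree_monoid_cases {M : Type*} [Monoid M] [Fintype M]
    (hgf : ∀ S : Set M, (∀ a ∈ S, ∀ b ∈ S, a * b ∈ S) →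
      (∃ e ∈ S, (∀ a ∈ S, e * a = a ∧ a * e = a) ∧
        ∀ a ∈ S, ∃ b ∈ S, a * b = e ∧ b * a = e) →
      ∃ x, S = {x}) :
    -- (a) M = {1}
    (∀ x : M, x = 1) ∨
    -- (b) M \ {1} = {σ, σ², …, σ^k} with σ^k = σ^{k+1}
    (∃ (σ : M) (k : ℕ), 1 ≤ k ∧
      {x : M | x ≠ 1} = {x : M | ∃ i, 1 ≤ i ∧ i ≤ k ∧ x = σ ^ i} ∧
      σ ^ k = σ ^ (k + 1)) ∨
    -- (c) σ·σ' = σ for all σ, σ' ≠ 1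
    (∀ a b : M, a ≠ 1 → b ≠ 1 → a * b = a) ∨
    -- (d) M = V ∪ T with proper submonoids V, T and T \ {1} a left ideal
    (∃ V T : Submonoid M, (V : Set M) ≠ Set.univ ∧ (T : Set M) ≠ Set.univ ∧
      (V : Set M) ∪ (T : Set M) = Set.univ ∧
      ∀ m : M, ∀ s ∈ T, s ≠ 1 → m * s ∈ T ∧ m * s ≠ 1) := by
  have hM : IsAperiodic M := IsGroupFree.isAperiodic hgf
  by_cases htriv : ∀ x : M, x = 1
  · exact Or.inl htriv
  push Not at htriv
  obtain ⟨x, hx⟩ := htriv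
  by_cases hcyc : ∃ σ : M, powers σ = ⊤
  · obtain ⟨σ, hσ⟩ := hcyc
    have hσ1 : σ ≠ 1 := by
      rintro rfl
      exact hx (by simpa [hσ.symm] using mem_top x)
    exact Or.inr (Or.inl ⟨σ, hM.exists_setOf_ne_one_eq_of_powers_eq_top hσ hσ1⟩)
  push Not at hcyc
  by_cases hL : ∀ a : M, a ≠ 1 → ∀ y : M, y ≠ 1 → ∃ m, m * a = y
  · exact Or.inr (Or.inr (Or.inl fun a b => hM.mul_eq_left_of_forall_exists_mul_eq hL))
  push Not at hL
  obtain ⟨a, ha, y, hy, hya⟩ := hL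
  exact Or.inr (Or.inr (Or.inr (hM.exists_submonoid_cover hcyc ha hy hya)))
end
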